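/- arXiv:1409.5893 — 6 statements merged into one kernel-verified Lean document; each statement's English description precedes it below -/
import Mathlib

section
/- For every integer ℓ ≥ 0 and every function f : ℝ → ℂ that is (ℓ+2)-times continuously differentiable, the function Ψ(t, r) = Σ_{k=0}^{ℓ} c_{ℓk} r^{−k} f^{(ℓ−k)}(t − r), where f^{(m)} denotes the m-th derivative of f, satisfies the radial wave equation ∂ₜ²Ψ(t,r) − ∂ᵣ²Ψ(t,r) + ℓ(ℓ+1) r^{−2} Ψ(t,r) = 0 for all t ∈ ℝ and all r > 0 (this is the general outgoing multipole solution; for ℓ = 2 it reads Ψ(t,r) = f''(t−r) + (3/r) f'(t−r) + (3/r²) f(t−r)). -/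
/-- The coefficients `c_{ℓk} = (ℓ+k)! / (2^k k! (ℓ-k)!)`. -/
noncomputable def besselCoeff (ℓ k : ℕ) : ℂ :=
  (Nat.factorial (ℓ + k) : ℂ) / (2 ^ k * Nat.factorial k * Nat.factorial (ℓ - k))

/-- The general outgoing multipole solution
`Ψ(t,r) = ∑_{k=0}^ℓ c_{ℓk} r^{-k} f^{(ℓ-k)}(t - r)`. -/
noncomputable def outgoingMultipole (ℓ : ℕ) (f : ℝ → ℂ) (t r : ℝ) : ℂ :=
  ∑ k ∈ Finset.range (ℓ + 1),
    besselCoeff ℓ k / (r : ℂ) ^ k * iteratedDeriv (ℓ - k) f (t - r)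

/-
The radial wave operator `∂ₜ² - ∂ᵣ² + L r⁻²` sends a term `a r⁻ᵏ g(t - r)` to
`(L - k(k+1)) a r⁻ᵏ⁻² g(t - r) - 2k a r⁻ᵏ⁻¹ g'(t - r)`, the second derivatives of `g` cancelling
between `∂ₜ²` and `∂ᵣ²`. For `L = ℓ(ℓ+1)` and `g_k = f^{(ℓ-k)}` we have `g_{k+1}' = g_k`, and the
recurrence `(ℓ(ℓ+1) - k(k+1)) c_{ℓk} = 2(k+1) c_{ℓ,k+1}` makes the images of consecutive terms
cancel; the first part vanishes for `k = ℓ` and the second for `k = 0`.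
-/

open Finset

noncomputable def radialWaveOp (L : ℂ) (Ψ : ℝ → ℝ → ℂ) (t r : ℝ) : ℂ :=
  deriv (fun t' => deriv (fun t'' => Ψ t'' r) t') t
    - deriv (fun r' => deriv (fun r'' => Ψ t r'') r') r + L / (r : ℂ) ^ 2 * Ψ t r

noncomputable def multipoleSum (s : Finset ℕ) (a : ℕ → ℂ) (g : ℕ → ℝ → ℂ) (t r : ℝ) : ℂ :=
  ∑ k ∈ s, a k / (r : ℂ) ^ k * g k (t - r)

section Term

variable (a : ℂ) (k : ℕ) {u : ℝ → ℂ} {u' : ℂ}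

lemma hasDerivAt_div_pow_mul_comp_sub_const (r t : ℝ) (hu : HasDerivAt u u' (t - r)) :
    HasDerivAt (fun t' : ℝ => a / (r : ℂ) ^ k * u (t' - r)) (a / (r : ℂ) ^ k * u') t := by
  have hcomp : HasDerivAt (fun t' : ℝ => u (t' - r)) ((1 : ℝ) • u') t :=
    hu.scomp t ((hasDerivAt_id t).sub_const r)
  simpa using hcomp.const_mul (a / (r : ℂ) ^ k)

lemma hasDerivAt_inv_ofReal_pow {r : ℝ} (hr : r ≠ 0) :
    HasDerivAt (fun r' : ℝ => ((r' : ℂ) ^ k)⁻¹) (-k / (r : ℂ) ^ (k + 1)) r := by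
  have hrc : (r : ℂ) ≠ 0 := Complex.ofReal_ne_zero.mpr hr
  refine (((hasDerivAt_pow k (r : ℂ)).inv (pow_ne_zero _ hrc)).comp_ofReal).congr_deriv ?_
  rcases k with _ | k
  · simp
  · rw [Nat.add_sub_cancel]
    field_simp
    ring

lemma hasDerivAt_div_pow_mul_comp_const_sub {r : ℝ} (hr : r ≠ 0) (t : ℝ)
    (hu : HasDerivAt u u' (t - r)) :
    HasDerivAt (fun r' : ℝ => a / (r' : ℂ) ^ k * u (t - r'))
      (-k * a / (r : ℂ) ^ (k + 1) * u (t - r) - a / (r : ℂ) ^ k * u') r := by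
  have hcomp : HasDerivAt (fun r' : ℝ => u (t - r')) ((-1 : ℝ) • u') r :=
    hu.scomp r (by simpa using (hasDerivAt_id r).const_sub t)
  refine (((hasDerivAt_inv_ofReal_pow k hr).const_mul a).fun_mul hcomp).congr_deriv ?_
  simp only [neg_one_smul, div_eq_mul_inv]
  ring

end Term

section Sum

variable (s : Finset ℕ) (a : ℕ → ℂ) {g g' : ℕ → ℝ → ℂ}

lemma deriv_deriv_multipoleSum_time (hg : ∀ k x, HasDerivAt (g k) (g' k x) x)
    (hg' : ∀ k, Differentiable ℝ (g' k)) (t r : ℝ) :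
    deriv (fun t' => deriv (fun t'' => multipoleSum s a g t'' r) t') t
      = ∑ k ∈ s, a k / (r : ℂ) ^ k * deriv (g' k) (t - r) := by
  have hfirst : ∀ t', HasDerivAt (fun t'' => multipoleSum s a g t'' r)
      (∑ k ∈ s, a k / (r : ℂ) ^ k * g' k (t' - r)) t' := fun t' =>
    HasDerivAt.fun_sum fun k _ => hasDerivAt_div_pow_mul_comp_sub_const _ _ _ _ (hg k _)
  have hsecond : HasDerivAt (fun t' => ∑ k ∈ s, a k / (r : ℂ) ^ k * g' k (t' - r))
      (∑ k ∈ s, a k / (r : ℂ) ^ k * deriv (g' k) (t - r)) t :=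
    HasDerivAt.fun_sum fun k _ =>
      hasDerivAt_div_pow_mul_comp_sub_const _ _ _ _ ((hg' k _).hasDerivAt)
  rw [funext fun t' => (hfirst t').deriv, hsecond.deriv]

lemma deriv_deriv_multipoleSum_radial (hg : ∀ k x, HasDerivAt (g k) (g' k x) x)
    (hg' : ∀ k, Differentiable ℝ (g' k)) (t : ℝ) {r : ℝ} (hr : r ≠ 0) :
    deriv (fun r' => deriv (fun r'' => multipoleSum s a g t r'') r') r
      = ∑ k ∈ s, (k * (k + 1) * a k / (r : ℂ) ^ (k + 2) * g k (t - r)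
          + 2 * k * a k / (r : ℂ) ^ (k + 1) * g' k (t - r)
          + a k / (r : ℂ) ^ k * deriv (g' k) (t - r)) := by
  set F : ℝ → ℂ := fun r' => ∑ k ∈ s,
    (-k * a k / (r' : ℂ) ^ (k + 1) * g k (t - r') - a k / (r' : ℂ) ^ k * g' k (t - r'))
  have hfirst : ∀ r' : ℝ, r' ≠ 0 →
      HasDerivAt (fun r'' => multipoleSum s a g t r'') (F r') r' := fun r' hr' =>
    HasDerivAt.fun_sum fun k _ => hasDerivAt_div_pow_mul_comp_const_sub _ _ hr' _ (hg k _)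
  have hsecond := HasDerivAt.fun_sum (u := s) fun k _ =>
    (hasDerivAt_div_pow_mul_comp_const_sub (-k * a k) (k + 1) hr t (hg k _)).fun_sub
      (hasDerivAt_div_pow_mul_comp_const_sub (a k) k hr t (hg' k _).hasDerivAt)
  have hev : (fun r' => deriv (fun r'' => multipoleSum s a g t r'') r') =ᶠ[nhds r] F := by
    filter_upwards [eventually_ne_nhds hr] with r' hr'
    exact (hfirst r' hr').deriv
  refine hev.deriv_eq.trans (hsecond.deriv.trans (sum_congr rfl fun k _ => ?_))
  push_cast
  ring

lemma radialWaveOp_multipoleSum (L : ℂ) (hg : ∀ k x, HasDerivAt (g k) (g' k x) x)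
    (hg' : ∀ k, Differentiable ℝ (g' k)) (t : ℝ) {r : ℝ} (hr : r ≠ 0) :
    radialWaveOp L (multipoleSum s a g) t r
      = ∑ k ∈ s, ((L - k * (k + 1)) * a k / (r : ℂ) ^ (k + 2) * g k (t - r)
          - 2 * k * a k / (r : ℂ) ^ (k + 1) * g' k (t - r)) := by
  have hrc : (r : ℂ) ≠ 0 := Complex.ofReal_ne_zero.mpr hr
  rw [radialWaveOp, deriv_deriv_multipoleSum_time s a hg hg',
    deriv_deriv_multipoleSum_radial s a hg hg' t hr, multipoleSum, mul_sum,
    ← sum_sub_distrib, ← sum_add_distrib]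
  refine sum_congr rfl fun k _ => ?_
  field_simp
  ring

end Sum

lemma ContDiff.hasDerivAt_iteratedDeriv {𝕜 E : Type*} [NontriviallyNormedField 𝕜]
    [NormedAddCommGroup E] [NormedSpace 𝕜 E] {f : 𝕜 → E} {n m : ℕ} (hf : ContDiff 𝕜 n f)
    (hm : m < n) (x : 𝕜) : HasDerivAt (iteratedDeriv m f) (iteratedDeriv (m + 1) f x) x := by
  rw [iteratedDeriv_succ]
  exact (hf.differentiable_iteratedDeriv m (mod_cast hm) x).hasDerivAt

lemma besselCoeff_recurrence {ℓ k : ℕ} (hk : k < ℓ) :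
    (ℓ * (ℓ + 1) - k * (k + 1)) * besselCoeff ℓ k = 2 * (k + 1) * besselCoeff ℓ (k + 1) := by
  obtain ⟨m, rfl⟩ : ∃ m, ℓ = k + 1 + m := ⟨ℓ - (k + 1), by omega⟩
  rw [besselCoeff, besselCoeff, show k + 1 + m - k = m + 1 by omega,
    show k + 1 + m - (k + 1) = m by omega, show k + 1 + m + (k + 1) = k + 1 + m + k + 1 by omega,
    Nat.factorial_succ (k + 1 + m + k), Nat.factorial_succ k, Nat.factorial_succ m]
  push_cast
  field_simp
  ring

lemma sum_besselCoeff_telescope (ℓ : ℕ) (r : ℂ) (X Y : ℕ → ℂ) (hXY : ∀ k < ℓ, Y (k + 1) = X k) :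
    ∑ k ∈ range (ℓ + 1), ((ℓ * (ℓ + 1) - k * (k + 1)) * besselCoeff ℓ k / r ^ (k + 2) * X k
      - 2 * k * besselCoeff ℓ k / r ^ (k + 1) * Y k) = 0 := by
  rw [sum_sub_distrib, sub_eq_zero, sum_range_succ, sum_range_succ']
  simp only [sub_self, zero_mul, zero_div, add_zero, CharP.cast_eq_zero, mul_zero]
  refine sum_congr rfl fun k hk => ?_
  have hk : k < ℓ := mem_range.mp hk
  rw [hXY k hk, besselCoeff_recurrence hk]
  push_cast
  ring

/-- For every `ℓ ≥ 0` and every `(ℓ+2)`-times continuously differentiable `f : ℝ → ℂ`,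
the outgoing multipole `Ψ(t,r) = ∑_{k=0}^ℓ c_{ℓk} r^{-k} f^{(ℓ-k)}(t-r)` satisfies the
radial wave equation `∂ₜ²Ψ - ∂ᵣ²Ψ + ℓ(ℓ+1) r^{-2} Ψ = 0` for all `t` and all `r > 0`. -/
theorem stmt_1 (ℓ : ℕ) (f : ℝ → ℂ) (hf : ContDiff ℝ (ℓ + 2 : ℕ) f) :
    ∀ (t r : ℝ), 0 < r →
      deriv (fun t' : ℝ => deriv (fun t'' : ℝ => outgoingMultipole ℓ f t'' r) t') t
      - deriv (fun r' : ℝ => deriv (fun r'' : ℝ => outgoingMultipole ℓ f t r'') r') r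
      + (ℓ : ℂ) * ((ℓ : ℂ) + 1) / (r : ℂ) ^ 2 * outgoingMultipole ℓ f t r = 0 := by
  intro t r hr
  have hg : ∀ k x, HasDerivAt (iteratedDeriv (ℓ - k) f) (iteratedDeriv (ℓ - k + 1) f x) x :=
    fun k => hf.hasDerivAt_iteratedDeriv (by omega)
  have hg' : ∀ k, Differentiable ℝ (iteratedDeriv (ℓ - k + 1) f) :=
    fun k => hf.differentiable_iteratedDeriv _ (mod_cast (by omega : ℓ - k + 1 < ℓ + 2))
  refine (radialWaveOp_multipoleSum (range (ℓ + 1)) (besselCoeff ℓ) (ℓ * (ℓ + 1)) hg hg' t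
    hr.ne').trans (sum_besselCoeff_telescope ℓ r _ _ fun k hk => ?_)
  rw [show ℓ - (k + 1) + 1 = ℓ - k by omega]
end

section
/- Let ℓ ≥ 1 and let b_1, …, b_ℓ be distinct nonzero complex numbers with ∏_{j=1}^{ℓ}(z − b_j) = z^ℓ W_ℓ(z) for all z ≠ 0, and let r1, r2 > 0. Then for every s ∈ ℂ with s ≠ 0, W_ℓ(s r1) ≠ 0, and s ≠ b_j/r1 for all j, the teleportation kernel admits the sum-of-poles representation Φ̂_ℓ(s, r1, r2) = Σ_{j=1}^{ℓ} a_j(r1, r2) / (s − b_j/r1), where a_j(r1, r2) = r1^{ℓ−1} · ∏_{k=1}^{ℓ} (b_j/r1 − b_k/r2) / ∏_{k=1, k≠j}^{ℓ} (b_j − b_k). -/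
/-- `W_ℓ(z) = ∑_{k=0}^ℓ c_{ℓk} z^{-k}`. -/
noncomputable def Wl (ℓ : ℕ) (z : ℂ) : ℂ :=
  ∑ k ∈ Finset.range (ℓ + 1), besselCoeff ℓ k / z ^ k

/-!
Since the `b_j` are the zeros of `z^ℓ W_ℓ(z)`, rescaling gives
`W_ℓ(s r) = s^{-ℓ} ∏_j (s - b_j / r)`, so `Φ̂_ℓ(s, r1, r2) = (P₂(s) - P₁(s)) / P₁(s)` with
`P_i = ∏_j (X - b_j / r_i)`. Both are monic of degree `ℓ`, so the numerator has degree `< ℓ` and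
is its own Lagrange interpolant at the nodes `b_j / r1`; the first barycentric form of that
interpolant is the partial fraction expansion, with residue `P₂(b_j / r1)` times the nodal weight
at `b_j / r1`.
-/

open Finset Polynomial Lagrange

namespace Lagrange

variable {F ι : Type*} [Field F] {s : Finset ι} {v : ι → F}

theorem degree_nodal_sub_nodal_lt (s : Finset ι) (v w : ι → F) :
    (nodal s w - nodal s v).degree < #s := by
  rw [← degree_nodal (v := w)]
  exact degree_sub_lt_left (by rw [degree_nodal, degree_nodal]) nodal_ne_zero
    (by rw [nodal_monic.leadingCoeff, nodal_monic.leadingCoeff])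

theorem eval_nodal_mul_eq_pow_mul_eval_nodal_div (s : Finset ι) (v : ι → F) {a : F} (ha : a ≠ 0)
    (x : F) :
    (nodal s v).eval (x * a) = a ^ #s * (nodal s fun i => v i / a).eval x := by
  simp only [eval_nodal, ← prod_const, ← prod_mul_distrib]
  refine prod_congr rfl fun i _ => ?_
  rw [mul_sub, mul_div_cancel₀ _ ha, mul_comm]

variable [DecidableEq ι]

theorem nodalWeight_div (s : Finset ι) (v : ι → F) (a : F) {i : ι} (hi : i ∈ s) :
    nodalWeight s (fun j => v j / a) i = a ^ (#s - 1) * nodalWeight s v i := by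
  rw [nodalWeight, nodalWeight, ← card_erase_of_mem hi, ← prod_const, ← prod_mul_distrib]
  refine prod_congr rfl fun j _ => ?_
  rw [← sub_div, inv_div, div_eq_mul_inv]

theorem eval_div_eval_nodal_eq_sum {f : F[X]} (hvs : Set.InjOn v s) (hf : f.degree < #s) {x : F}
    (hx : ∀ i ∈ s, x ≠ v i) :
    f.eval x / (nodal s v).eval x = ∑ i ∈ s, nodalWeight s v i * f.eval (v i) / (x - v i) := by
  conv_lhs => rw [eq_interpolate hvs hf]
  rw [eval_interpolate_not_at_node _ hx, mul_div_cancel_left₀ _ (eval_nodal_not_at_node hx)]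
  refine sum_congr rfl fun i _ => ?_
  rw [div_eq_mul_inv]
  ring

theorem eval_nodal_div_eval_nodal_sub_one_eq_sum (hvs : Set.InjOn v s) (w : ι → F) {x : F}
    (hx : ∀ i ∈ s, x ≠ v i) :
    (nodal s w).eval x / (nodal s v).eval x - 1
      = ∑ i ∈ s, nodalWeight s v i * (nodal s w).eval (v i) / (x - v i) := by
  have hne : (nodal s v).eval x ≠ 0 := eval_nodal_not_at_node hx
  rw [← div_self hne, div_sub_div_same, ← eval_sub,
    eval_div_eval_nodal_eq_sum hvs (degree_nodal_sub_nodal_lt s v w) hx]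
  refine sum_congr rfl fun i hi => ?_
  rw [eval_sub, eval_nodal_at_node hi, sub_zero]

end Lagrange

section Wl

variable {ℓ : ℕ} {b : Fin ℓ → ℂ}

theorem Wl_eq_eval_nodal_div (hprod : ∀ z : ℂ, z ≠ 0 → ∏ j, (z - b j) = z ^ ℓ * Wl ℓ z)
    {z : ℂ} (hz : z ≠ 0) : Wl ℓ z = (nodal univ b).eval z / z ^ ℓ := by
  rw [eval_nodal, hprod z hz, mul_div_cancel_left₀ _ (pow_ne_zero _ hz)]

theorem Wl_mul_eq_eval_nodal_div (hprod : ∀ z : ℂ, z ≠ 0 → ∏ j, (z - b j) = z ^ ℓ * Wl ℓ z)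
    {s r : ℂ} (hs : s ≠ 0) (hr : r ≠ 0) :
    Wl ℓ (s * r) = (nodal univ fun j => b j / r).eval s / s ^ ℓ := by
  rw [Wl_eq_eval_nodal_div hprod (mul_ne_zero hs hr),
    eval_nodal_mul_eq_pow_mul_eval_nodal_div _ _ hr, card_univ, Fintype.card_fin, mul_pow,
    mul_comm (s ^ ℓ), mul_div_mul_left _ _ (pow_ne_zero _ hr)]

end Wl

theorem stmt_2_general (ℓ : ℕ) (b : Fin ℓ → ℂ)
    (hinj : Function.Injective b)
    (hprod : ∀ z : ℂ, z ≠ 0 → ∏ j, (z - b j) = z ^ ℓ * Wl ℓ z)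
    (r1 r2 : ℝ) (hr1 : 0 < r1) (hr2 : 0 < r2)
    (s : ℂ) (hs : s ≠ 0) (hsp : ∀ j, s ≠ b j / r1) :
    -1 + Wl ℓ (s * r2) / Wl ℓ (s * r1)
      = ∑ j, ((r1 : ℂ) ^ (ℓ - 1) *
            (∏ k, (b j / r1 - b k / r2)) / ∏ k ∈ Finset.univ.erase j, (b j - b k))
          / (s - b j / r1) := by
  have hr1' : (r1 : ℂ) ≠ 0 := by exact_mod_cast hr1.ne'
  have hr2' : (r2 : ℂ) ≠ 0 := by exact_mod_cast hr2.ne'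
  have hinj' : Function.Injective fun j => b j / (r1 : ℂ) := fun i j h =>
    hinj ((div_left_inj' hr1').mp h)
  rw [Wl_mul_eq_eval_nodal_div hprod hs hr1', Wl_mul_eq_eval_nodal_div hprod hs hr2',
    div_div_div_cancel_right₀ (pow_ne_zero _ hs), neg_add_eq_sub,
    eval_nodal_div_eval_nodal_sub_one_eq_sum hinj'.injOn _ fun j _ => hsp j]
  refine sum_congr rfl fun j _ => ?_
  rw [nodalWeight_div _ _ _ (mem_univ j), nodalWeight, prod_inv_distrib, eval_nodal, card_univ,
    Fintype.card_fin]
  ring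

/-- Sum-of-poles representation of the frequency-domain teleportation kernel
`Φ̂_ℓ(s, r1, r2) = -1 + W_ℓ(s r2)/W_ℓ(s r1)`, with residues
`a_j(r1,r2) = r1^{ℓ-1} ∏_k (b_j/r1 - b_k/r2) / ∏_{k≠j} (b_j - b_k)`. -/
theorem stmt_2 (ℓ : ℕ) (hℓ : 1 ≤ ℓ) (b : Fin ℓ → ℂ)
    (hinj : Function.Injective b) (hb0 : ∀ j, b j ≠ 0)
    (hprod : ∀ z : ℂ, z ≠ 0 → ∏ j, (z - b j) = z ^ ℓ * Wl ℓ z)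
    (r1 r2 : ℝ) (hr1 : 0 < r1) (hr2 : 0 < r2)
    (s : ℂ) (hs : s ≠ 0) (hW : Wl ℓ (s * r1) ≠ 0) (hsp : ∀ j, s ≠ b j / r1) :
    -1 + Wl ℓ (s * r2) / Wl ℓ (s * r1)
      = ∑ j, ((r1 : ℂ) ^ (ℓ - 1) *
            (∏ k, (b j / r1 - b k / r2)) / ∏ k ∈ Finset.univ.erase j, (b j - b k))
          / (s - b j / r1) :=
  stmt_2_general ℓ b hinj hprod r1 r2 hr1 hr2 s hs hsp
end

section
/- Let ℓ ≥ 0 be an integer, s ∈ ℂ with s ≠ 0, and 0 < r1 ≤ r2. Suppose W_ℓ(s η) ≠ 0 for every η in the interval [r1, r2]. Then W_ℓ(s r2)/W_ℓ(s r1) = exp( ∫_{r1}^{r2} Ω̂_ℓ(s, η) / η dη ); equivalently, the teleportation kernel admits the integral representation Φ̂_ℓ(s, r1, r2) = −1 + exp( ∫_{r1}^{r2} Ω̂_ℓ(s, η) / η dη ). -/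
/-- The frequency-domain boundary kernel `Ω̂_ℓ(s,r) = s r W'_ℓ(s r)/W_ℓ(s r)`. -/
noncomputable def boundaryKernel (ℓ : ℕ) (s : ℂ) (r : ℝ) : ℂ :=
  s * r * deriv (Wl ℓ) (s * r) / Wl ℓ (s * r)

/-!
For `g η = W_ℓ(s η)` the integrand `Ω̂_ℓ(s, η) / η = s W'_ℓ(s η) / W_ℓ(s η)` is the logarithmic
derivative `g' / g`, and for any nonvanishing `C¹` function `g` the product `g · exp (-∫ g' / g)`
has zero derivative, hence is constant.
-/

open Set

theorem div_eq_exp_integral_deriv_div {g g' : ℝ → ℂ} {a b : ℝ} (hab : a ≤ b)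
    (hg : ContinuousOn g (Icc a b)) (hderiv : ∀ t ∈ Ioo a b, HasDerivAt g (g' t) t)
    (hg' : ContinuousOn g' (Icc a b)) (hg0 : ∀ t ∈ Icc a b, g t ≠ 0) :
    g b / g a = Complex.exp (∫ t in a..b, g' t / g t) := by
  set F : ℝ → ℂ := fun t => g' t / g t
  set I : ℝ → ℂ := fun t => ∫ u in a..t, F u
  have hF : ContinuousOn F (Icc a b) := hg'.div hg hg0
  have hFint : MeasureTheory.IntegrableOn F (uIcc a b) := by
    rw [uIcc_of_le hab]; exact hF.integrableOn_Icc
  have hI : ContinuousOn I (Icc a b) := by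
    simpa only [uIcc_of_le hab] using intervalIntegral.continuousOn_primitive_interval hFint
  have hconst : ∫ _ in a..b, (0 : ℂ) = g b * Complex.exp (-I b) - g a * Complex.exp (-I a) := by
    refine intervalIntegral.integral_eq_sub_of_hasDerivAt_of_le hab
      (hg.mul (hI.neg.cexp)) (fun t ht => ?_) intervalIntegrable_const
    have hsub : uIcc a t ⊆ uIcc a b := by
      rw [uIcc_of_le hab, uIcc_of_le ht.1.le]; exact Icc_subset_Icc_right ht.2.le
    have hIt : HasDerivAt I (F t) t :=
      intervalIntegral.integral_hasDerivAt_right (hFint.mono_set hsub).intervalIntegrable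
        (hF.mono Ioo_subset_Icc_self |>.stronglyMeasurableAtFilter isOpen_Ioo t ht)
        (hF.continuousAt (Icc_mem_nhds ht.1 ht.2))
    refine ((hderiv t ht).mul hIt.neg.cexp).congr_deriv ?_
    have := hg0 t (Ioo_subset_Icc_self ht)
    simp only [Pi.neg_apply, F]
    field_simp
    ring
  have hIa : I a = 0 := intervalIntegral.integral_same
  rw [intervalIntegral.integral_zero, hIa, neg_zero, Complex.exp_zero, mul_one, eq_comm,
    sub_eq_zero, Complex.exp_neg] at hconst
  show g b / g a = Complex.exp (I b)
  rw [div_eq_iff (hg0 a (left_mem_Icc.2 hab)), ← hconst]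
  field_simp

theorem differentiableOn_Wl (ℓ : ℕ) : DifferentiableOn ℂ (Wl ℓ) {0}ᶜ := by
  intro z hz
  unfold Wl
  fun_prop (disch := exact pow_ne_zero _ hz)

theorem hasDerivAt_Wl_mul_ofReal (ℓ : ℕ) (s : ℂ) {η : ℝ} (hη : s * η ≠ 0) :
    HasDerivAt (fun t : ℝ => Wl ℓ (s * t)) (s * deriv (Wl ℓ) (s * η)) η := by
  have hd : HasDerivAt (Wl ℓ) (deriv (Wl ℓ) (s * η)) (s * η) :=
    ((differentiableOn_Wl ℓ).differentiableAt (isOpen_compl_singleton.mem_nhds hη)).hasDerivAt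
  have := (hd.comp (η : ℂ) ((hasDerivAt_id (η : ℂ)).const_mul s)).comp_ofReal
  rwa [mul_one, mul_comm] at this

theorem boundaryKernel_div_eq (ℓ : ℕ) (s : ℂ) {η : ℝ} (hη : η ≠ 0) :
    boundaryKernel ℓ s η / η = s * deriv (Wl ℓ) (s * η) / Wl ℓ (s * η) := by
  have : (η : ℂ) ≠ 0 := Complex.ofReal_ne_zero.2 hη
  unfold boundaryKernel
  field_simp

/-- Integral representation of the teleportation kernel:
`W_ℓ(s r2)/W_ℓ(s r1) = exp(∫_{r1}^{r2} Ω̂_ℓ(s,η)/η dη)`, equivalently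
`Φ̂_ℓ(s,r1,r2) = -1 + exp(∫_{r1}^{r2} Ω̂_ℓ(s,η)/η dη)`. -/
theorem stmt_7 (ℓ : ℕ) (s : ℂ) (hs : s ≠ 0) (r1 r2 : ℝ) (hr1 : 0 < r1) (hr12 : r1 ≤ r2)
    (hW : ∀ η ∈ Set.Icc r1 r2, Wl ℓ (s * η) ≠ 0) :
    Wl ℓ (s * r2) / Wl ℓ (s * r1)
        = Complex.exp (∫ η in r1..r2, boundaryKernel ℓ s η / (η : ℂ)) ∧
      -1 + Wl ℓ (s * r2) / Wl ℓ (s * r1)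
        = -1 + Complex.exp (∫ η in r1..r2, boundaryKernel ℓ s η / (η : ℂ)) := by
  have hpos : ∀ η ∈ Icc r1 r2, 0 < η := fun η hη => hr1.trans_le hη.1
  have hsη : MapsTo (fun η : ℝ => s * η) (Icc r1 r2) {0}ᶜ := fun η hη =>
    mul_ne_zero hs (Complex.ofReal_ne_zero.2 (hpos η hη).ne')
  have hlin : ContinuousOn (fun η : ℝ => s * η) (Icc r1 r2) := by fun_prop
  have hWl := differentiableOn_Wl ℓ
  have hkernel : ∫ η in r1..r2, boundaryKernel ℓ s η / (η : ℂ)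
      = ∫ η in r1..r2, s * deriv (Wl ℓ) (s * η) / Wl ℓ (s * η) := by
    refine intervalIntegral.integral_congr fun η hη => ?_
    rw [uIcc_of_le hr12] at hη
    exact boundaryKernel_div_eq ℓ s (hpos η hη).ne'
  have hratio : Wl ℓ (s * r2) / Wl ℓ (s * r1)
      = Complex.exp (∫ η in r1..r2, s * deriv (Wl ℓ) (s * η) / Wl ℓ (s * η)) :=
    div_eq_exp_integral_deriv_div hr12 (hWl.continuousOn.comp hlin hsη)
      (fun η hη => hasDerivAt_Wl_mul_ofReal ℓ s (hsη (Ioo_subset_Icc_self hη)))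
      (continuousOn_const.mul
        ((hWl.deriv isOpen_compl_singleton).continuousOn.comp hlin hsη)) hW
  rw [hkernel, hratio]
  exact ⟨rfl, rfl⟩
end

section
/- Let ℓ ≥ 1, let b_1, …, b_ℓ be distinct nonzero complex numbers with ∏_{j=1}^{ℓ}(z − b_j) = z^ℓ W_ℓ(z) for all z ≠ 0, let r1, r2 > 0, and let a_j(r1, r2) = r1^{ℓ−1} · ∏_{k=1}^{ℓ} (b_j/r1 − b_k/r2) / ∏_{k=1, k≠j}^{ℓ} (b_j − b_k). Then the time-domain teleportation kernel Φ_ℓ(t, r1, r2) = Σ_{j=1}^{ℓ} a_j(r1, r2) · e^{b_j t / r1} is real-valued: its imaginary part vanishes for every real t. -/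
/-- The residues `a_j(r1,r2) = r1^{ℓ-1} ∏_k (b_j/r1 - b_k/r2) / ∏_{k≠j}(b_j - b_k)`. -/
noncomputable def teleResidue (ℓ : ℕ) (b : Fin ℓ → ℂ) (j : Fin ℓ) (r1 r2 : ℝ) : ℂ :=
  (r1 : ℂ) ^ (ℓ - 1) *
    (∏ k, (b j / r1 - b k / r2)) / ∏ k ∈ Finset.univ.erase j, (b j - b k)

open ComplexConjugate

lemma conj_Wl (ℓ : ℕ) (z : ℂ) : conj (Wl ℓ z) = Wl ℓ (conj z) := by
  simp only [Wl, besselCoeff, map_sum, map_div₀, map_pow, map_mul, map_ofNat,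
    Complex.conj_natCast]

lemma exists_perm_comp_eq_of_mem_range {ι α : Type*} [Finite ι] {b : ι → α} {g : α → α}
    (hg : Function.Injective g) (hb : Function.Injective b) (h : ∀ j, g (b j) ∈ Set.range b) :
    ∃ σ : Equiv.Perm ι, ∀ j, g (b j) = b (σ j) := by
  choose σ hσ using h
  have hσinj : Function.Injective σ := fun i j hij =>
    hb (hg (by rw [← hσ i, ← hσ j, hij]))
  exact ⟨Equiv.ofBijective σ (Finite.injective_iff_bijective.mp hσinj), fun j => (hσ j).symm⟩

lemma conj_mem_range_of_prod_sub_eq_Wl {ℓ : ℕ} {b : Fin ℓ → ℂ} (hb0 : ∀ j, b j ≠ 0)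
    (hprod : ∀ z : ℂ, z ≠ 0 → ∏ j, (z - b j) = z ^ ℓ * Wl ℓ z) (j : Fin ℓ) :
    conj (b j) ∈ Set.range b := by
  have hzero : (b j) ^ ℓ * Wl ℓ (b j) = 0 := by
    rw [← hprod (b j) (hb0 j)]
    exact Finset.prod_eq_zero (Finset.mem_univ j) (sub_self _)
  have hconj_zero : ∏ k, (conj (b j) - b k) = 0 := by
    rw [hprod _ ((map_ne_zero _).mpr (hb0 j)), ← conj_Wl, ← map_pow, ← map_mul, hzero,
      map_zero]
  obtain ⟨k, -, hk⟩ := Finset.prod_eq_zero_iff.mp hconj_zero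
  exact ⟨k, (sub_eq_zero.mp hk).symm⟩

lemma conj_teleResidue {ℓ : ℕ} {b : Fin ℓ → ℂ} (σ : Equiv.Perm (Fin ℓ))
    (hσ : ∀ j, conj (b j) = b (σ j)) (j : Fin ℓ) (r1 r2 : ℝ) :
    conj (teleResidue ℓ b j r1 r2) = teleResidue ℓ b (σ j) r1 r2 := by
  have hnum : conj (∏ k, (b j / r1 - b k / r2)) = ∏ k, (b (σ j) / r1 - b k / r2) := by
    rw [map_prod]
    refine Finset.prod_equiv σ (by simp) fun k _ => ?_
    simp only [map_sub, map_div₀, hσ, Complex.conj_ofReal]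
  have hden : conj (∏ k ∈ Finset.univ.erase j, (b j - b k)) =
      ∏ k ∈ Finset.univ.erase (σ j), (b (σ j) - b k) := by
    rw [map_prod]
    refine Finset.prod_equiv σ (by simp) fun k _ => ?_
    simp only [map_sub, hσ]
  simp only [teleResidue, map_div₀, map_mul, map_pow, Complex.conj_ofReal, hnum, hden]

lemma im_sum_eq_zero_of_conj_eq_comp_perm {ι : Type*} [Fintype ι] {F : ι → ℂ}
    (σ : Equiv.Perm ι) (h : ∀ j, conj (F j) = F (σ j)) : (∑ j, F j).im = 0 := by
  rw [← Complex.conj_eq_iff_im, map_sum]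
  simp only [h]
  exact Equiv.sum_comp σ F

theorem stmt_11_general (ℓ : ℕ) (b : Fin ℓ → ℂ)
    (hinj : Function.Injective b) (hb0 : ∀ j, b j ≠ 0)
    (hprod : ∀ z : ℂ, z ≠ 0 → ∏ j, (z - b j) = z ^ ℓ * Wl ℓ z)
    (r1 r2 : ℝ) :
    ∀ t : ℝ,
      (∑ j, teleResidue ℓ b j r1 r2 * Complex.exp (b j * t / r1)).im = 0 := by
  intro t
  obtain ⟨σ, hσ⟩ := exists_perm_comp_eq_of_mem_range (starRingEnd ℂ).injective hinj
    (conj_mem_range_of_prod_sub_eq_Wl hb0 hprod)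
  refine im_sum_eq_zero_of_conj_eq_comp_perm σ fun j => ?_
  rw [map_mul, conj_teleResidue σ hσ, ← Complex.exp_conj, map_div₀, map_mul, hσ,
    Complex.conj_ofReal, Complex.conj_ofReal]

/-- The time-domain teleportation kernel
`Φ_ℓ(t,r1,r2) = ∑_j a_j(r1,r2) e^{b_j t/r1}` is real-valued. -/
theorem stmt_11 (ℓ : ℕ) (hℓ : 1 ≤ ℓ) (b : Fin ℓ → ℂ)
    (hinj : Function.Injective b) (hb0 : ∀ j, b j ≠ 0)
    (hprod : ∀ z : ℂ, z ≠ 0 → ∏ j, (z - b j) = z ^ ℓ * Wl ℓ z)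
    (r1 r2 : ℝ) (hr1 : 0 < r1) (hr2 : 0 < r2) :
    ∀ t : ℝ,
      (∑ j, teleResidue ℓ b j r1 r2 * Complex.exp (b j * t / r1)).im = 0 :=
  stmt_11_general ℓ b hinj hb0 hprod r1 r2
end

section
/- Let ℓ ≥ 1, let b_1, …, b_ℓ be distinct nonzero complex numbers with ∏_{j=1}^{ℓ}(z − b_j) = z^ℓ W_ℓ(z) for all z ≠ 0, let r1, r2 > 0, and let a_j(r1, r2) = r1^{ℓ−1} · ∏_{k=1}^{ℓ} (b_j/r1 − b_k/r2) / ∏_{k=1, k≠j}^{ℓ} (b_j − b_k). Then the sum of the residues, which equals the time-domain teleportation kernel at t = 0, is Σ_{j=1}^{ℓ} a_j(r1, r2) = (1/r1) · (ℓ(ℓ+1)/2) · (r1/r2 − 1). -/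
/-! With `P(z) = ∏ₖ (z - bₖ)` and `c = r2/r1`, the residue `aⱼ` is `r1^(ℓ-1) r2^(-ℓ)` times the
Lagrange weight of `P(c bⱼ)`. Since `P(bⱼ) = 0`, `P(c bⱼ)` is also the value at `bⱼ` of
`Q(z) = P(cz) - c^ℓ P(z)`, which has degree `< ℓ`; so `∑ⱼ aⱼ` is a multiple of the top
coefficient of `Q`, namely `(c^(ℓ-1) - c^ℓ)` times the `z^(ℓ-1)` coefficient of `P`. By the
hypothesis `P` is the reverse Bessel polynomial, whose `z^(ℓ-1)` coefficient is
`c_{ℓ1} = ℓ(ℓ+1)/2`. -/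

open Polynomial Finset

theorem Lagrange.sum_eval_nodal_mul_div_prod {F ι : Type*} [Field F] [DecidableEq ι]
    {s : Finset ι} {v : ι → F} (hvs : Set.InjOn v s) (c : F) :
    ∑ i ∈ s, (nodal s v).eval (c * v i) / ∏ j ∈ s.erase i, (v i - v j)
      = (c ^ (#s - 1) - c ^ #s) * (nodal s v).coeff (#s - 1) := by
  set Q := (nodal s v).comp (C c * X) - C (c ^ #s) * nodal s v
  have hQcoeff (m : ℕ) : Q.coeff m = (c ^ m - c ^ #s) * (nodal s v).coeff m := by
    simp only [Q, coeff_sub, comp_C_mul_X_coeff, coeff_C_mul]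
    ring
  have hQdeg : Q.degree < #s := by
    refine (degree_lt_iff_coeff_zero _ _).2 fun m hm => ?_
    rcases hm.eq_or_lt with rfl | hm
    · rw [hQcoeff, sub_self, zero_mul]
    · rw [hQcoeff, coeff_eq_zero_of_natDegree_lt (by rwa [natDegree_nodal]), mul_zero]
  have hQeval (i) (hi : i ∈ s) : Q.eval (v i) = (nodal s v).eval (c * v i) := by
    simp [Q, eval_nodal_at_node hi]
  rw [← hQcoeff, coeff_eq_sum hvs hQdeg]
  exact sum_congr rfl fun i hi => by rw [hQeval i hi]

noncomputable def reverseBesselPoly (ℓ : ℕ) : ℂ[X] :=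
  ∑ k ∈ range (ℓ + 1), C (besselCoeff ℓ k) * X ^ (ℓ - k)

theorem eval_reverseBesselPoly (ℓ : ℕ) {z : ℂ} (hz : z ≠ 0) :
    (reverseBesselPoly ℓ).eval z = z ^ ℓ * Wl ℓ z := by
  simp only [reverseBesselPoly, Wl, eval_finsetSum, eval_mul, eval_C, eval_pow, eval_X, mul_sum]
  refine sum_congr rfl fun k hk => ?_
  rw [pow_sub₀ z hz (by simpa [Nat.lt_succ_iff] using hk)]
  ring

theorem coeff_reverseBesselPoly_pred {ℓ : ℕ} (hℓ : 1 ≤ ℓ) :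
    (reverseBesselPoly ℓ).coeff (ℓ - 1) = besselCoeff ℓ 1 := by
  have hpred (k) (hk : k ∈ range (ℓ + 1)) : (ℓ - 1 = ℓ - k) ↔ (1 = k) := by
    rw [mem_range] at hk; omega
  simp only [reverseBesselPoly, finsetSum_coeff, coeff_C_mul_X_pow]
  rw [sum_congr rfl fun k hk' => by rw [if_congr (hpred k hk') rfl rfl], sum_ite_eq,
    if_pos (mem_range.2 (by omega))]

theorem besselCoeff_one {ℓ : ℕ} (hℓ : 1 ≤ ℓ) : besselCoeff ℓ 1 = ℓ * (ℓ + 1) / 2 := by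
  obtain ⟨n, rfl⟩ := Nat.exists_eq_add_of_le' hℓ
  have hfac : (n.factorial : ℂ) ≠ 0 := by exact_mod_cast n.factorial_ne_zero
  rw [besselCoeff, Nat.add_sub_cancel, Nat.factorial_succ, Nat.factorial_succ]
  push_cast
  field_simp
  ring

theorem nodal_eq_reverseBesselPoly {ℓ : ℕ} (b : Fin ℓ → ℂ)
    (hprod : ∀ z : ℂ, z ≠ 0 → ∏ j, (z - b j) = z ^ ℓ * Wl ℓ z) :
    Lagrange.nodal univ b = reverseBesselPoly ℓ := by
  refine eq_of_infinite_eval_eq _ _ ((Set.finite_singleton 0).infinite_compl.mono fun z hz => ?_)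
  rw [Set.mem_ofPred_eq, Lagrange.eval_nodal, eval_reverseBesselPoly ℓ hz, hprod z hz]

theorem teleResidue_eq {ℓ : ℕ} (b : Fin ℓ → ℂ) (j : Fin ℓ) {r1 r2 : ℝ} (hr1 : (r1 : ℂ) ≠ 0)
    (hr2 : (r2 : ℂ) ≠ 0) :
    teleResidue ℓ b j r1 r2 = r1 ^ (ℓ - 1) / r2 ^ ℓ *
      ((Lagrange.nodal univ b).eval (r2 / r1 * b j) / ∏ k ∈ univ.erase j, (b j - b k)) := by
  have hfac (k) : b j / r1 - b k / r2 = (r2 / r1 * b j - b k) / r2 := by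
    field_simp
  rw [teleResidue, Lagrange.eval_nodal, prod_congr rfl fun k _ => hfac k, prod_div_distrib,
    prod_const, card_fin]
  ring

theorem stmt_13_general (ℓ : ℕ) (hℓ : 1 ≤ ℓ) (b : Fin ℓ → ℂ)
    (hinj : Function.Injective b)
    (hprod : ∀ z : ℂ, z ≠ 0 → ∏ j, (z - b j) = z ^ ℓ * Wl ℓ z)
    (r1 r2 : ℝ) (hr1 : 0 < r1) (hr2 : 0 < r2) :
    ∑ j, teleResidue ℓ b j r1 r2
      = (1 / (r1 : ℂ)) * ((ℓ : ℂ) * ((ℓ : ℂ) + 1) / 2) * ((r1 : ℂ) / (r2 : ℂ) - 1) := by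
  have hr1' : (r1 : ℂ) ≠ 0 := by exact_mod_cast hr1.ne'
  have hr2' : (r2 : ℂ) ≠ 0 := by exact_mod_cast hr2.ne'
  have hcoeff : (Lagrange.nodal univ b).coeff (ℓ - 1) = ℓ * (ℓ + 1) / 2 := by
    rw [nodal_eq_reverseBesselPoly b hprod, coeff_reverseBesselPoly_pred hℓ, besselCoeff_one hℓ]
  have hsum := Lagrange.sum_eval_nodal_mul_div_prod (s := univ) hinj.injOn (r2 / r1 : ℂ)
  rw [card_fin, hcoeff] at hsum
  simp_rw [teleResidue_eq b _ hr1' hr2', ← mul_sum, hsum]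
  obtain ⟨n, rfl⟩ := Nat.exists_eq_add_of_le' hℓ
  rw [Nat.add_sub_cancel, div_pow, div_pow]
  field_simp
  ring

/-- The sum of the residues, i.e. the time-domain teleportation kernel at `t = 0`,
equals `(1/r1) (ℓ(ℓ+1)/2) (r1/r2 - 1)`. -/
theorem stmt_13 (ℓ : ℕ) (hℓ : 1 ≤ ℓ) (b : Fin ℓ → ℂ)
    (hinj : Function.Injective b) (hb0 : ∀ j, b j ≠ 0)
    (hprod : ∀ z : ℂ, z ≠ 0 → ∏ j, (z - b j) = z ^ ℓ * Wl ℓ z)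
    (r1 r2 : ℝ) (hr1 : 0 < r1) (hr2 : 0 < r2) :
    ∑ j, teleResidue ℓ b j r1 r2
      = (1 / (r1 : ℂ)) * ((ℓ : ℂ) * ((ℓ : ℂ) + 1) / 2) * ((r1 : ℂ) / (r2 : ℂ) - 1) :=
  stmt_13_general ℓ hℓ b hinj hprod r1 r2 hr1 hr2
end

section
/- Let n, p ≥ 1 and let D_1, …, D_p be closed disks in ℂ, where D_k has center c_k and radius r_k > 0. Let q_1, …, q_n ∈ ℂ and z_1, …, z_n ∈ ⋃_{k=1}^{p} D_k, and set f(z) = Σ_{j=1}^{n} q_j/(z − z_j). Then there exists a constant K > 0, independent of a and of m, such that for every integer m ≥ 1 and every real a > 1 there exist complex numbers γ_1, …, γ_{m·p} and β_1, …, β_{m·p} (pole locations) for which the function g(z) = Σ_{i=1}^{m·p} γ_i/(z − β_i) satisfies, for every z in the region 𝒰_a = { z ∈ ℂ : Re(z − c_k) ≥ a·r_k for all 1 ≤ k ≤ p }, the bound |f(z) − g(z)| ≤ K·(a² + 1)/((a^m − 1)(a − 1)²) · | Σ_{j=1}^{n} |q_j|/(z − z_j) |. -/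
/-!
Put `m` distinct nodes `β_i` within `δ r` of the centre of each disk. Newton interpolation of
`u ↦ 1 / (w - u)` at the nodes, rewritten in partial fractions, gives
`1 / (w - z) = ∑ γ_i / (w - β_i) + ω(z) / (ω(w) (w - z))` with `ω(u) = ∏ (u - β_i)`.
For `z` in the disk and `w ∈ 𝒰_a` the remainder is at most
`((1 + δ) / (1 - δ))^m (r / |w - c|)^m / |w - z|`; choosing `((1 + δ) / (1 - δ))^m = 2` and using
`Re (w - z) ≥ (a - 1) r`, it is at most `C_a · Re (1 / (w - z))` with
`C_a = 4 (a² + 1) / ((a^m - 1) (a - 1)²)`. Merging the nodes of each disk gives `m p` poles, and the weighted sum of these bounds is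
`C_a · Re (∑ |q_j| / (w - z_j)) ≤ C_a |∑ |q_j| / (w - z_j)|`.
-/

open Finset

theorem exists_one_div_sub_eq_sum_div_add {K ι : Type*} [Field K] [DecidableEq ι]
    (s : Finset ι) {t : ι → K} (ht : Set.InjOn t s) (z : K) :
    ∃ γ : ι → K, ∀ w, (∀ i ∈ s, w ≠ t i) → w ≠ z →
      1 / (w - z) = ∑ i ∈ s, γ i / (w - t i) +
        (∏ i ∈ s, (z - t i)) / ((∏ i ∈ s, (w - t i)) * (w - z)) := by
  induction s using Finset.induction_on generalizing z with
  | empty => exact ⟨0, fun w _ _ => by simp⟩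
  | insert a s ha ih =>
    have hts : Set.InjOn t s := ht.mono (by simp)
    obtain ⟨γz, hγz⟩ := ih hts z
    obtain ⟨γa, hγa⟩ := ih hts (t a)
    have hPa : ∏ i ∈ s, (t a - t i) ≠ 0 := prod_ne_zero_iff.2 fun i hi =>
      sub_ne_zero.2 fun h => ha (ht (mem_insert_self a s) (mem_insert_of_mem hi) h ▸ hi)
    obtain ⟨κ, hκ⟩ : ∃ κ, κ * ∏ i ∈ s, (t a - t i) = ∏ i ∈ s, (z - t i) :=
      ⟨_, div_mul_cancel₀ _ hPa⟩
    -- The new node `t a` enters with coefficient `κ`; the expansion of `1 / (w - t a)`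
    -- over the old nodes converts the remainder of `s` into that of `insert a s`.
    refine ⟨fun i => if i = a then κ else γz i - κ * γa i, fun w hw hwz => ?_⟩
    have hws : ∀ i ∈ s, w ≠ t i := fun i hi => hw i (mem_insert_of_mem hi)
    have hwa : w - t a ≠ 0 := sub_ne_zero.2 (hw a (mem_insert_self a s))
    have hPw : ∏ i ∈ s, (w - t i) ≠ 0 := prod_ne_zero_iff.2 fun i hi => sub_ne_zero.2 (hws i hi)
    have hsum : ∑ i ∈ s, (if i = a then κ else γz i - κ * γa i) / (w - t i)
        = ∑ i ∈ s, γz i / (w - t i) - κ * ∑ i ∈ s, γa i / (w - t i) := by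
      rw [mul_sum, ← sum_sub_distrib]
      refine sum_congr rfl fun i hi => ?_
      rw [if_neg (ne_of_mem_of_not_mem hi ha), sub_div, mul_div_assoc]
    simp only [sum_insert ha, prod_insert ha, ↓reduceIte, hsum]
    have h1 := hγz w hws hwz
    have h2 := hγa w hws (hw a (mem_insert_self a s))
    have hwz' : w - z ≠ 0 := sub_ne_zero.2 hwz
    linear_combination (norm := skip) h1 - κ * h2
    field_simp
    linear_combination (z - w) * hκ

theorem norm_prod_sub_div_le {K ι : Type*} [NormedField K] (s : Finset ι) {t : ι → K}
    {z w : K} {ρ σ : ℝ} (hz : ∀ i ∈ s, ‖z - t i‖ ≤ ρ) (hw : ∀ i ∈ s, σ ≤ ‖w - t i‖)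
    (hσ : 0 < σ) (hwz : w ≠ z) :
    ‖(∏ i ∈ s, (z - t i)) / ((∏ i ∈ s, (w - t i)) * (w - z))‖
      ≤ ρ ^ #s / (σ ^ #s * ‖w - z‖) := by
  have hnum : ∏ i ∈ s, ‖z - t i‖ ≤ ρ ^ #s := by
    simpa using prod_le_prod (fun i _ => norm_nonneg _) hz
  have hden : σ ^ #s ≤ ∏ i ∈ s, ‖w - t i‖ := by
    simpa using prod_le_prod (fun i _ => hσ.le) hw
  rw [norm_div, norm_mul, norm_prod, norm_prod]
  exact div_le_div₀ ((prod_nonneg fun i _ => norm_nonneg _).trans hnum) hnum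
    (by positivity [norm_pos_iff.2 (sub_ne_zero.2 hwz)])
    (mul_le_mul_of_nonneg_right hden (norm_nonneg _))

theorem exists_one_add_pow_eq_two_mul_one_sub_pow {m : ℕ} (hm : m ≠ 0) :
    ∃ δ : ℝ, 0 < δ ∧ δ < 1 ∧ (1 + δ) ^ m = 2 * (1 - δ) ^ m := by
  set b : ℝ := 2 ^ (m⁻¹ : ℝ)
  have hb : 1 < b := Real.one_lt_rpow (by norm_num) (by positivity)
  refine ⟨(b - 1) / (b + 1), div_pos (by linarith) (by linarith),
    (div_lt_one (by linarith)).2 (by linarith), ?_⟩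
  have hδ : 1 + (b - 1) / (b + 1) = b * (1 - (b - 1) / (b + 1)) := by
    field_simp
    ring
  rw [hδ, mul_pow, Real.rpow_inv_natCast_pow (by norm_num) hm]

theorem two_mul_pow_div_le {a r T N R : ℝ} {m : ℕ} (hm : m ≠ 0) (ha : 1 < a) (hr : 0 < r)
    (hT : a * r ≤ T) (hN : N ≤ T + r) (hR : (a - 1) * r ≤ R) (hN0 : 0 < N) :
    2 * r ^ m / (T ^ m * N) ≤ 4 * (a ^ 2 + 1) / ((a ^ m - 1) * (a - 1) ^ 2) * (R / N ^ 2) := by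
  obtain ⟨n, rfl⟩ : ∃ n, m = n + 1 := ⟨m - 1, by omega⟩
  have ha1 : 0 < a - 1 := by linarith
  have hrT : r ≤ T := by nlinarith
  have han : 0 < a ^ (n + 1) - 1 := by linarith [one_lt_pow₀ ha hm]
  have hgeom : (a ^ (n + 1) - 1) * (a - 1) ≤ (a ^ 2 + 1) * a ^ n := by
    nlinarith [pow_pos (by linarith : (0:ℝ) < a) n, pow_succ a n]
  have hkey : r ^ n * ((a ^ (n + 1) - 1) * (a - 1)) ≤ (a ^ 2 + 1) * T ^ n :=
    calc r ^ n * ((a ^ (n + 1) - 1) * (a - 1))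
        ≤ r ^ n * ((a ^ 2 + 1) * a ^ n) := by gcongr
      _ = (a ^ 2 + 1) * (a * r) ^ n := by ring
      _ ≤ (a ^ 2 + 1) * T ^ n := by gcongr
  have hT0 : 0 < T := hr.trans_le hrT
  have hR0 : 0 ≤ R := (mul_pos ha1 hr).le.trans hR
  rw [div_mul_div_comm, div_le_div_iff₀ (by positivity [hT0])
    (mul_pos (mul_pos han (by positivity)) (by positivity))]
  calc 2 * r ^ (n + 1) * ((a ^ (n + 1) - 1) * (a - 1) ^ 2 * N ^ 2)
      = 2 * ((a - 1) * r) * (r ^ n * ((a ^ (n + 1) - 1) * (a - 1))) * N * N := by ring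
    _ ≤ 2 * R * ((a ^ 2 + 1) * T ^ n) * N * (2 * T) := by
        gcongr
        linarith
    _ = 4 * (a ^ 2 + 1) * R * (T ^ (n + 1) * N) := by ring

theorem exists_nodes_norm_one_div_sub_sub_sum_le (c : ℂ) {r a : ℝ} (hr : 0 < r) (ha : 1 < a)
    {m : ℕ} (hm : m ≠ 0) :
    ∃ β : Fin m → ℂ, ∀ z ∈ Metric.closedBall c r, ∃ γ : Fin m → ℂ, ∀ w : ℂ,
      a * r ≤ (w - c).re →
        ‖1 / (w - z) - ∑ i, γ i / (w - β i)‖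
          ≤ 4 * (a ^ 2 + 1) / ((a ^ m - 1) * (a - 1) ^ 2) * (1 / (w - z)).re := by
  obtain ⟨δ, hδ0, hδ1, hδ⟩ := exists_one_add_pow_eq_two_mul_one_sub_pow hm
  have hball : (Metric.closedBall c (δ * r)).Infinite :=
    infinite_of_mem_nhds c (Metric.closedBall_mem_nhds c (by positivity))
  obtain ⟨β, hβinj, hβ⟩ : ∃ β : Fin m → ℂ, Function.Injective β ∧ ∀ i, ‖β i - c‖ ≤ δ * r :=
    ⟨fun i => hball.natEmbedding _ i,
      Subtype.val_injective.comp ((hball.natEmbedding _).injective.comp Fin.val_injective),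
      fun i => mem_closedBall_iff_norm.mp (hball.natEmbedding _ i).2⟩
  refine ⟨β, fun z hz => ?_⟩
  rw [Metric.mem_closedBall, dist_eq_norm] at hz
  obtain ⟨γ, hγ⟩ := exists_one_div_sub_eq_sum_div_add univ hβinj.injOn z
  refine ⟨γ, fun w hw => ?_⟩
  have hT : a * r ≤ ‖w - c‖ := hw.trans (Complex.re_le_norm _)
  have hrT : r ≤ ‖w - c‖ := le_trans (by nlinarith) hT
  have hwβ : ∀ i, (1 - δ) * ‖w - c‖ ≤ ‖w - β i‖ := fun i => by
    nlinarith [norm_sub_le_norm_sub_add_norm_sub w (β i) c, hβ i]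
  have hzβ : ∀ i, ‖z - β i‖ ≤ (1 + δ) * r := fun i => by
    linarith [norm_sub_le_norm_sub_add_norm_sub z c (β i), norm_sub_rev c (β i), hβ i]
  have hR : (a - 1) * r ≤ (w - z).re := by
    have : (z - c).re ≤ r := (Complex.re_le_norm _).trans hz
    rw [← sub_sub_sub_cancel_right w z c, Complex.sub_re]
    linarith
  have hwz : w ≠ z := by
    rintro rfl
    simp only [sub_self, Complex.zero_re] at hR
    nlinarith
  have hN : ‖w - z‖ ≤ ‖w - c‖ + r := by
    linarith [norm_sub_le_norm_sub_add_norm_sub w c z, norm_sub_rev c z]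
  have hσ : 0 < (1 - δ) * ‖w - c‖ := mul_pos (sub_pos.2 hδ1) (hr.trans_le hrT)
  have hwβ' : ∀ i ∈ univ, w ≠ β i := fun i _ h => by
    simpa [h] using hσ.trans_le (hwβ i)
  rw [sub_eq_of_eq_add' (hγ w hwβ' hwz), one_div, Complex.inv_re, Complex.normSq_eq_norm_sq]
  calc _ ≤ ((1 + δ) * r) ^ m / (((1 - δ) * ‖w - c‖) ^ m * ‖w - z‖) := by
        simpa using norm_prod_sub_div_le univ (fun i _ => hzβ i) (fun i _ => hwβ i) hσ hwz
    _ = 2 * r ^ m / (‖w - c‖ ^ m * ‖w - z‖) := by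
        rw [mul_pow, mul_pow, hδ]
        field_simp [(sub_pos.2 hδ1).ne']
    _ ≤ _ := two_mul_pow_div_le hm ha hr hT hN hR (norm_pos_iff.2 (sub_ne_zero.2 hwz))

theorem sum_prod_sum_ite_div_eq_sum_mul_sum_div {K I J P : Type*} [DivisionRing K] [Fintype I]
    [Fintype J] [Fintype P] [DecidableEq P] (κ : J → P) (q : J → K) (γ : J → I → K)
    (β : P → I → K) (w : K) :
    ∑ x : I × P, (∑ j, if κ j = x.2 then q j * γ j x.1 else 0) / (w - β x.2 x.1)
      = ∑ j, q j * ∑ i, γ j i / (w - β (κ j) i) := by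
  simp only [Fintype.sum_prod_type, sum_div, ite_div, zero_div, mul_sum, mul_div_assoc]
  simp only [Finset.sum_comm (s := (univ : Finset P)) (t := (univ : Finset J)), sum_ite_eq,
    mem_univ, if_true]
  exact Finset.sum_comm

theorem norm_sum_mul_le_mul_norm_sum {ι : Type*} (s : Finset ι) (q e u : ι → ℂ) {C : ℝ}
    (hC : 0 ≤ C) (h : ∀ j ∈ s, ‖e j‖ ≤ C * (u j).re) :
    ‖∑ j ∈ s, q j * e j‖ ≤ C * ‖∑ j ∈ s, (‖q j‖ : ℂ) * u j‖ :=
  calc ‖∑ j ∈ s, q j * e j‖ ≤ ∑ j ∈ s, ‖q j‖ * (C * (u j).re) :=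
        (norm_sum_le _ _).trans <| sum_le_sum fun j hj => by
          rw [norm_mul]
          exact mul_le_mul_of_nonneg_left (h j hj) (norm_nonneg _)
    _ = C * (∑ j ∈ s, (‖q j‖ : ℂ) * u j).re := by
        simp only [Complex.re_sum, Complex.re_ofReal_mul, mul_sum]
        exact sum_congr rfl fun j _ => by ring
    _ ≤ C * ‖∑ j ∈ s, (‖q j‖ : ℂ) * u j‖ :=
        mul_le_mul_of_nonneg_left (Complex.re_le_norm _) hC

theorem stmt_17_general (n p : ℕ)
    (c : Fin p → ℂ) (r : Fin p → ℝ) (hr : ∀ k, 0 < r k)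
    (q : Fin n → ℂ) (z : Fin n → ℂ)
    (hz : ∀ j, z j ∈ ⋃ k, Metric.closedBall (c k) (r k)) :
    ∃ K > (0 : ℝ), ∀ m : ℕ, 1 ≤ m → ∀ a : ℝ, 1 < a →
      ∃ γ β : Fin (m * p) → ℂ,
        ∀ w : ℂ, (∀ k, a * r k ≤ (w - c k).re) →
          ‖(∑ j, q j / (w - z j)) - ∑ i, γ i / (w - β i)‖
            ≤ K * (a ^ 2 + 1) / ((a ^ m - 1) * (a - 1) ^ 2) *
              ‖∑ j, (‖q j‖ : ℂ) / (w - z j)‖ := by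
  refine ⟨4, by norm_num, fun m hm a ha => ?_⟩
  choose β hβ using fun k =>
    exists_nodes_norm_one_div_sub_sub_sum_le (c k) (hr k) ha (Nat.one_le_iff_ne_zero.mp hm)
  choose κ hκ using fun j => Set.mem_iUnion.mp (hz j)
  choose γ hγ using fun j => hβ (κ j) (z j) (hκ j)
  set Γ : Fin m × Fin p → ℂ := fun x => ∑ j, if κ j = x.2 then q j * γ j x.1 else 0
  refine ⟨Γ ∘ finProdFinEquiv.symm, (fun x => β x.2 x.1) ∘ finProdFinEquiv.symm, fun w hw => ?_⟩
  have hC : 0 ≤ 4 * (a ^ 2 + 1) / ((a ^ m - 1) * (a - 1) ^ 2) :=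
    div_nonneg (by positivity) (mul_nonneg (by linarith [one_le_pow₀ ha.le (n := m)])
      (by positivity))
  simp only [Function.comp_apply]
  rw [finProdFinEquiv.symm.sum_comp (fun x => Γ x / (w - β x.2 x.1)),
    sum_prod_sum_ite_div_eq_sum_mul_sum_div, ← sum_sub_distrib]
  simp only [div_eq_mul_one_div (q _), ← mul_sub, div_eq_mul_one_div (‖q _‖ : ℂ)]
  exact norm_sum_mul_le_mul_norm_sum _ _ _ _ hC fun j _ => hγ j w (hw (κ j))

/-- Lemma on compressed sum-of-poles approximations: if `f(z) = ∑_j q_j/(z - z_j)`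
has all pole locations in a union of `p` disks, there is a constant `K > 0`
(independent of `m` and `a`) such that for each `m ≥ 1` and `a > 1` some sum
`g(z) = ∑_{i=1}^{m·p} γ_i/(z - β_i)` of `m·p` simple poles approximates `f` on the
region `𝒰_a = {z : Re(z - c_k) ≥ a r_k for all k}` with error bounded by
`K (a²+1)/((a^m - 1)(a-1)²) |∑_j |q_j|/(z - z_j)|`. -/
theorem stmt_17 (n p : ℕ) (hn : 1 ≤ n) (hp : 1 ≤ p)
    (c : Fin p → ℂ) (r : Fin p → ℝ) (hr : ∀ k, 0 < r k)
    (q : Fin n → ℂ) (z : Fin n → ℂ)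
    (hz : ∀ j, z j ∈ ⋃ k, Metric.closedBall (c k) (r k)) :
    ∃ K > (0 : ℝ), ∀ m : ℕ, 1 ≤ m → ∀ a : ℝ, 1 < a →
      ∃ γ β : Fin (m * p) → ℂ,
        ∀ w : ℂ, (∀ k, a * r k ≤ (w - c k).re) →
          ‖(∑ j, q j / (w - z j)) - ∑ i, γ i / (w - β i)‖
            ≤ K * (a ^ 2 + 1) / ((a ^ m - 1) * (a - 1) ^ 2) *
              ‖∑ j, (‖q j‖ : ℂ) / (w - z j)‖ :=
  stmt_17_general n p c r hr q z hz
end
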